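/- Let S be a sequence over {O,U} of even length m. Then for every k, the sequence S' obtained from S by cyclically rotating it by k positions satisfies |Φ(S')| = |Φ(S)|. Consequently, the cyclic OU number Φ(w) := |Φ(S)| of the cyclic word w represented by S is well defined, independent of the chosen linearization. -/
import Mathlib


/-- The two-letter alphabet {O, U}. -/
inductive OULetter : Type
  | O : OULetter
  | U : OULetter
deriving DecidableEq

open OULetter

/-- The sign `ε` of the letter `X` at the (1-indexed) position `i`:
`+1` if (`X = O` and `i` is even) or (`X = U` and `i` is odd), and `-1` otherwise. -/
def eps (X : OULetter) (i : ℕ) : ℤ :=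
  match X with
  | O => if i % 2 = 0 then 1 else -1
  | U => if i % 2 = 1 then 1 else -1

/-- The sign sum `Σ_{i=1}^m ε(X_i)` of a sequence `S = X₁X₂…X_m`. -/
def signSum (S : List OULetter) : ℤ :=
  ∑ j : Fin S.length, eps (S.get j) (j.1 + 1)

/-- The OU number `Φ(S) = (1/2)·Σ_{i=1}^m ε(X_i)` of a sequence `S`. -/
def Phi (S : List OULetter) : ℚ := (signSum S : ℚ) / 2

def fval (X : OULetter) : ℤ := match X with | O => -1 | U => 1

def gsum : List OULetter → ℤ
  | [] => 0
  | x :: t => fval x - gsum t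

lemma eps_succ (X : OULetter) (i : ℕ) : eps X (i + 1) = - eps X i := by
  rcases Nat.mod_two_eq_zero_or_one i with h | h <;>
    cases X <;> simp [eps, Nat.add_mod, h]

lemma signSum_eq_gsum (S : List OULetter) : signSum S = gsum S := by
  induction S with
  | nil => rfl
  | cons x t ih =>
    rw [signSum, gsum]
    show (∑ j : Fin (t.length + 1), eps ((x :: t).get j) (j.1 + 1)) = _
    rw [Fin.sum_univ_succ]
    have : ∀ j : Fin t.length,
        eps ((x :: t).get (Fin.succ j)) ((Fin.succ j).1 + 1) =
          - eps (t.get j) (j.1 + 1) := by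
      intro j
      simp only [List.get_cons_succ, Fin.val_succ]
      exact eps_succ _ _
    rw [Finset.sum_congr rfl (fun j _ => this j), Finset.sum_neg_distrib, ← signSum, ih]
    simp [eps, fval]
    ring

lemma gsum_append_singleton (t : List OULetter) (x : OULetter) :
    gsum (t ++ [x]) = gsum t + (-1 : ℤ) ^ t.length * fval x := by
  induction t with
  | nil => simp [gsum]
  | cons y s ih =>
    rw [show (y :: s) ++ [x] = y :: (s ++ [x]) from rfl, gsum, ih, List.length_cons, pow_succ]
    rw [gsum]; ring

lemma signSum_rotate_one (S : List OULetter) (heven : Even S.length) :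
    signSum (S.rotate 1) = - signSum S := by
  cases S with
  | nil =>
    rw [List.rotate_nil]
    simp [signSum]
  | cons x t =>
    have hlen : Even (t.length + 1) := by simpa using heven
    have hodd : (-1 : ℤ) ^ t.length = -1 := by
      have : ¬ Even t.length := by
        rcases hlen with ⟨r, hr⟩
        intro ⟨s, hs⟩
        omega
      exact Odd.neg_one_pow (Nat.not_even_iff_odd.mp this)
    rw [List.rotate_cons_succ, List.rotate_zero, signSum_eq_gsum, signSum_eq_gsum,
      gsum_append_singleton, hodd, gsum]
    ring

/-- For a sequence of even length, the absolute value of the OU number is invariant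
under arbitrary cyclic rotation: the cyclic OU number is well defined. -/
theorem abs_phi_rotate (S : List OULetter) (heven : Even S.length) (k : ℕ) :
    |Phi (S.rotate k)| = |Phi S| := by
  induction k generalizing S with
  | zero => rw [List.rotate_zero]
  | succ k ih =>
    have h1 : S.rotate (k + 1) = (S.rotate 1).rotate k := by
      rw [List.rotate_rotate, Nat.add_comm]
    rw [h1, ih (S.rotate 1) (by simpa using heven)]
    have := signSum_rotate_one S heven
    unfold Phi
    rw [this]
    push_cast
    rw [neg_div, abs_neg]
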